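/- arXiv:2605.06829 — 3 statements merged into one kernel-verified Lean document; each statement's English description precedes it below -/
import Mathlib

section
/- Let v : ℝ^d × ℝ → ℝ^d and ρ : ℝ × ℝ^d → (0,∞) be continuously differentiable, satisfying the continuity equation ∂_t ρ + div(ρ v) = 0. If t ↦ X_t is a C¹ trajectory solving dX_t/dt = v(X_t, t), then d/dt log ρ_t(X_t) = -div v(X_t, t). -/
noncomputable def pderiv' {d : ℕ} (i : Fin d) (f : (Fin d → ℝ) → ℝ)
    (x : Fin d → ℝ) : ℝ :=
  fderiv ℝ f x (Pi.single i 1)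

noncomputable def diverg {d : ℕ} (F : (Fin d → ℝ) → (Fin d → ℝ))
    (x : Fin d → ℝ) : ℝ :=
  ∑ i, pderiv' i (fun y => F y i) x

lemma sum_single_eq {d : ℕ} (w : Fin d → ℝ) :
    ∑ i, w i • (Pi.single i 1 : Fin d → ℝ) = w := by
  funext j
  simp [Finset.sum_apply, Pi.single_apply]

/-- **Instantaneous change of variables.** If `ρ > 0` is `C¹` jointly in `(t,x)`,
`v` is `C¹`, the continuity equation `∂_t ρ + div(ρ v) = 0` holds, and `X` is a
`C¹` trajectory with `dX_t/dt = v(X_t, t)`, then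
`d/dt log ρ_t(X_t) = -div v(X_t, t)`. -/
theorem instantaneous_change_of_variables {d : ℕ}
    (ρ : ℝ × (Fin d → ℝ) → ℝ)
    (v : (Fin d → ℝ) → ℝ → (Fin d → ℝ))
    (X : ℝ → (Fin d → ℝ))
    (hρreg : ContDiff ℝ 1 ρ)
    (hρpos : ∀ p, 0 < ρ p)
    (hvreg : ContDiff ℝ 1 (fun p : (Fin d → ℝ) × ℝ => v p.1 p.2))
    (hce : ∀ t x, fderiv ℝ ρ (t, x) (1, 0) +
      diverg (fun y => ρ (t, y) • v y t) x = 0)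
    (hX : ∀ t, HasDerivAt X (v (X t) t) t) :
    ∀ t, deriv (fun τ => Real.log (ρ (τ, X τ))) t =
      -diverg (fun y => v y t) (X t) := by
  intro t
  set x := X t with hx
  set w := v (X t) t with hw
  have hρd : Differentiable ℝ ρ := hρreg.differentiable one_ne_zero
  have hvd : Differentiable ℝ (fun p : (Fin d → ℝ) × ℝ => v p.1 p.2) :=
    hvreg.differentiable one_ne_zero
  set Dρ := fderiv ℝ ρ (t, x) with hDρ
  -- derivative of the curve τ ↦ (τ, X τ)
  have hcurve : HasDerivAt (fun τ => (τ, X τ)) ((1 : ℝ), w) t :=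
    HasDerivAt.prodMk (hasDerivAt_id t) (hX t)
  have hA : HasDerivAt (fun τ => ρ (τ, X τ)) (Dρ (1, w)) t :=
    (hρd (t, x)).hasFDerivAt.comp_hasDerivAt t hcurve
  -- fderiv of y ↦ (t, y)
  have hemb : HasFDerivAt (fun y : Fin d → ℝ => ((t : ℝ), y))
      (ContinuousLinearMap.inr ℝ ℝ (Fin d → ℝ)) x :=
    HasFDerivAt.prodMk (hasFDerivAt_const (t : ℝ) x) (hasFDerivAt_id x)
  have hρt : HasFDerivAt (fun y => ρ (t, y))
      (Dρ.comp (ContinuousLinearMap.inr ℝ ℝ (Fin d → ℝ))) x :=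
    ((hρd (t, x)).hasFDerivAt).comp x hemb
  -- fderiv of y ↦ (y, t)
  have hemb2 : HasFDerivAt (fun y : Fin d → ℝ => (y, (t : ℝ)))
      (ContinuousLinearMap.inl ℝ (Fin d → ℝ) ℝ) x :=
    HasFDerivAt.prodMk (hasFDerivAt_id x) (hasFDerivAt_const (t : ℝ) x)
  set Dv := fderiv ℝ (fun p : (Fin d → ℝ) × ℝ => v p.1 p.2) (x, t) with hDv
  have hV : HasFDerivAt (fun y => v y t)
      (Dv.comp (ContinuousLinearMap.inl ℝ (Fin d → ℝ) ℝ)) x :=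
    by have := ((hvd (x, t)).hasFDerivAt).comp x hemb2; exact this
  have hVi : ∀ i : Fin d, HasFDerivAt (fun y => v y t i)
      ((ContinuousLinearMap.proj (R := ℝ) (φ := fun _ : Fin d => ℝ) i).comp
        (Dv.comp (ContinuousLinearMap.inl ℝ (Fin d → ℝ) ℝ))) x := by
    intro i
    exact (ContinuousLinearMap.proj (R := ℝ) (φ := fun _ : Fin d => ℝ)
      i).hasFDerivAt.comp x hV
  have hbi : ∀ i : Fin d, pderiv' i (fun y => v y t i) x =
      Dv (Pi.single i 1, 0) i := by
    intro i
    rw [pderiv', (hVi i).fderiv]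
    simp
  -- partial derivative of y ↦ ρ (t, y)
  have hai : ∀ i : Fin d, pderiv' i (fun y => ρ (t, y)) x = Dρ (0, Pi.single i 1) := by
    intro i
    rw [pderiv', hρt.fderiv]
    simp
  -- product rule for components of ρ • v
  have hprod : ∀ i : Fin d,
      pderiv' i (fun y => (ρ (t, y) • v y t) i) x =
        Dρ (0, Pi.single i 1) * w i + ρ (t, x) * pderiv' i (fun y => v y t i) x := by
    intro i
    have heq : (fun y => (ρ (t, y) • v y t) i) = fun y => ρ (t, y) * v y t i := by
      funext y; simp
    rw [heq]
    have hm : HasFDerivAt (fun y => ρ (t, y) * v y t i) _ x := hρt.mul (hVi i)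
    rw [pderiv', hm.fderiv, hbi i]
    simp only [ContinuousLinearMap.add_apply, ContinuousLinearMap.smul_apply,
      ContinuousLinearMap.coe_comp', Function.comp_apply,
      ContinuousLinearMap.inr_apply, ContinuousLinearMap.inl_apply,
      ContinuousLinearMap.proj_apply, smul_eq_mul]
    have hwx : w i = v x t i := rfl
    rw [hwx]
    ring
  -- expand the continuity equation
  have hdiv : diverg (fun y => ρ (t, y) • v y t) x =
      (∑ i, Dρ (0, Pi.single i 1) * w i) + ρ (t, x) * diverg (fun y => v y t) x := by
    rw [diverg]
    simp only [hprod]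
    rw [Finset.sum_add_distrib, ← Finset.mul_sum]
    rfl
  -- linearity: Dρ (1, w) = Dρ (1,0) + ∑ i, Dρ (0, e i) * w i
  have hlin : Dρ (1, w) = Dρ (1, 0) + ∑ i, Dρ (0, Pi.single i 1) * w i := by
    have hsplit : ((1 : ℝ), w) =
        ((1 : ℝ), (0 : Fin d → ℝ)) +
          ∑ i, w i • (((0 : ℝ), (Pi.single i 1 : Fin d → ℝ)) : ℝ × (Fin d → ℝ)) := by
      have h2 : (∑ i, w i • (((0 : ℝ), (Pi.single i 1 : Fin d → ℝ)) : ℝ × (Fin d → ℝ))) =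
          (((0 : ℝ), w) : ℝ × (Fin d → ℝ)) := by
        rw [Prod.ext_iff]
        refine ⟨?_, ?_⟩
        · rw [Prod.fst_sum]; simp
        · rw [Prod.snd_sum]
          simp only [Prod.smul_snd]
          exact sum_single_eq w
      rw [h2]
      simp
    rw [hsplit, map_add, map_sum]
    simp only [map_smul, smul_eq_mul]
    congr 1
    exact Finset.sum_congr rfl fun i _ => mul_comm _ _
  have hceq := hce t x
  rw [hdiv] at hceq
  have hkey : Dρ (1, w) = -(ρ (t, x) * diverg (fun y => v y t) x) := by
    rw [hlin]; linarith
  -- final computation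
  have hne : ρ (t, x) ≠ 0 := (hρpos (t, x)).ne'
  have hlog : HasDerivAt (fun τ => Real.log (ρ (τ, X τ)))
      (Dρ (1, w) / ρ (t, x)) t := hA.log hne
  rw [hlog.deriv, hkey]
  field_simp
end

section
/- Under the hypotheses of the instantaneous change-of-variables formula, log ρ_0(X_0) = log ρ_1(X_1) + ∫_0^1 div v(X_t, t) dt for any C¹ trajectory X solving the ODE dX_t/dt = v(X_t,t) on [0,1]. -/
/-- **Integrated change of variables along an ODE trajectory.** Under the
hypotheses of the instantaneous change-of-variables formula,
`log ρ_0(X_0) = log ρ_1(X_1) + ∫_0^1 div v(X_t, t) dt`. -/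
theorem log_likelihood_ode {d : ℕ}
    (ρ : ℝ × (Fin d → ℝ) → ℝ)
    (v : (Fin d → ℝ) → ℝ → (Fin d → ℝ))
    (X : ℝ → (Fin d → ℝ))
    (hρreg : ContDiff ℝ 1 ρ)
    (hρpos : ∀ p, 0 < ρ p)
    (hvreg : ContDiff ℝ 1 (fun p : (Fin d → ℝ) × ℝ => v p.1 p.2))
    (hce : ∀ t x, fderiv ℝ ρ (t, x) (1, 0) +
      diverg (fun y => ρ (t, y) • v y t) x = 0)
    (hX : ∀ t, HasDerivAt X (v (X t) t) t) :
    Real.log (ρ (0, X 0)) =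
      Real.log (ρ (1, X 1)) + ∫ t in (0 : ℝ)..1, diverg (fun y => v y t) (X t) := by
  have hρd := hρreg.differentiable one_ne_zero
  have hVd := hvreg.differentiable one_ne_zero
  set V : (Fin d → ℝ) × ℝ → Fin d → ℝ := fun p => v p.1 p.2 with hVdef
  -- derivative of i-th component of v in the space variable
  have hvA : ∀ (t : ℝ) (x : Fin d → ℝ) (i : Fin d),
      HasFDerivAt (fun y => v y t i)
        ((ContinuousLinearMap.proj i).comp ((fderiv ℝ V (x, t)).comp
          (ContinuousLinearMap.inl ℝ (Fin d → ℝ) ℝ))) x := by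
    intro t x i
    have h1 : HasFDerivAt V (fderiv ℝ V (x, t)) (x, t) := (hVd _).hasFDerivAt
    have h2 : HasFDerivAt (fun y : Fin d → ℝ => (y, t))
        (ContinuousLinearMap.inl ℝ (Fin d → ℝ) ℝ) x :=
      HasFDerivAt.prodMk (hasFDerivAt_id x) (hasFDerivAt_const t x)
    exact (ContinuousLinearMap.proj i).hasFDerivAt.comp x (h1.comp x h2)
  have hρx : ∀ (t : ℝ) (x : Fin d → ℝ),
      HasFDerivAt (fun y => ρ (t, y))
        ((fderiv ℝ ρ (t, x)).comp (ContinuousLinearMap.inr ℝ ℝ (Fin d → ℝ))) x := by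
    intro t x
    have h1 : HasFDerivAt ρ (fderiv ℝ ρ (t, x)) (t, x) := (hρd _).hasFDerivAt
    have h2 : HasFDerivAt (fun y : Fin d → ℝ => ((t : ℝ), y))
        (ContinuousLinearMap.inr ℝ ℝ (Fin d → ℝ)) x :=
      HasFDerivAt.prodMk (hasFDerivAt_const t x) (hasFDerivAt_id x)
    exact h1.comp x h2
  have hpv : ∀ (t : ℝ) (x : Fin d → ℝ) (i : Fin d),
      pderiv' i (fun y => v y t i) x = fderiv ℝ V (x, t) (Pi.single i 1, 0) i := by
    intro t x i
    unfold pderiv'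
    rw [(hvA t x i).fderiv]
    simp
  have hdivv : ∀ (t : ℝ) (x : Fin d → ℝ),
      diverg (fun y => v y t) x = ∑ i, fderiv ℝ V (x, t) (Pi.single i 1, 0) i := by
    intro t x
    exact Finset.sum_congr rfl fun i _ => hpv t x i
  -- continuity of X and of the divergence along the trajectory
  have hXcont : Continuous X := by
    rw [continuous_iff_continuousAt]
    exact fun t => (hX t).continuousAt
  have hAcont : Continuous (fderiv ℝ V) := hvreg.continuous_fderiv one_ne_zero
  have hcont : Continuous (fun t => diverg (fun y => v y t) (X t)) := by
    simp only [hdivv]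
    apply continuous_finset_sum
    intro i _
    have hc : Continuous (fun t => fderiv ℝ V (X t, t)) :=
      hAcont.comp (hXcont.prodMk continuous_id)
    exact (continuous_apply i).comp (hc.clm_apply continuous_const)
  -- the key derivative computation
  have key : ∀ t : ℝ, HasDerivAt (fun s => Real.log (ρ (s, X s)))
      (-(diverg (fun y => v y t) (X t))) t := by
    intro t
    set x := X t with hx
    set w := v x t with hw
    have hB : HasFDerivAt ρ (fderiv ℝ ρ (t, x)) (t, x) := (hρd _).hasFDerivAt
    have hcurve : HasDerivAt (fun s : ℝ => (s, X s)) ((1 : ℝ), w) t :=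
      HasDerivAt.prodMk (hasDerivAt_id t) (hX t)
    have h1 : HasDerivAt (fun s => ρ (s, X s)) (fderiv ℝ ρ (t, x) (1, w)) t :=
      hB.comp_hasDerivAt t hcurve
    have hlog : HasDerivAt (fun s => Real.log (ρ (s, X s)))
        (fderiv ℝ ρ (t, x) (1, w) / ρ (t, x)) t := h1.log (hρpos _).ne'
    -- expand the continuity equation
    have hmul : ∀ i, pderiv' i (fun y => (ρ (t, y) • v y t) i) x =
        ρ (t, x) * fderiv ℝ V (x, t) (Pi.single i 1, 0) i
          + v x t i * fderiv ℝ ρ (t, x) (0, Pi.single i 1) := by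
      intro i
      have hm : HasFDerivAt (fun y => ρ (t, y) * v y t i)
          (ρ (t, x) • ((ContinuousLinearMap.proj i).comp ((fderiv ℝ V (x, t)).comp
            (ContinuousLinearMap.inl ℝ (Fin d → ℝ) ℝ)))
           + v x t i • ((fderiv ℝ ρ (t, x)).comp (ContinuousLinearMap.inr ℝ ℝ (Fin d → ℝ)))) x :=
        (hρx t x).mul (hvA t x i)
      have : pderiv' i (fun y => (ρ (t, y) • v y t) i) x
          = pderiv' i (fun y => ρ (t, y) * v y t i) x := rfl
      rw [this]
      unfold pderiv'
      rw [hm.fderiv]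
      simp [mul_comm]
  -- decompose fderiv ρ (t,x) (0, w)
    have hw2 : (∑ i, w i • (Pi.single i 1 : Fin d → ℝ)) = w := by
      funext j
      simp [Pi.single_apply]
    have hwsum : ((0 : ℝ), w) = ∑ i, w i • ((0 : ℝ), (Pi.single i 1 : Fin d → ℝ)) := by
      rw [Prod.ext_iff]
      constructor
      · simp [Prod.fst_sum]
      · simp [Prod.snd_sum, hw2]
    have hS : fderiv ℝ ρ (t, x) (0, w) = ∑ i, w i * fderiv ℝ ρ (t, x) (0, Pi.single i 1) := by
      rw [hwsum, map_sum]
      refine Finset.sum_congr rfl fun i _ => ?_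
      rw [map_smul, smul_eq_mul]
    have hcediv : diverg (fun y => ρ (t, y) • v y t) x
        = ρ (t, x) * (∑ i, fderiv ℝ V (x, t) (Pi.single i 1, 0) i)
          + fderiv ℝ ρ (t, x) (0, w) := by
      unfold diverg
      rw [hS, Finset.mul_sum, ← Finset.sum_add_distrib]
      exact Finset.sum_congr rfl fun i _ => hmul i
    have hsplit : fderiv ℝ ρ (t, x) (1, w)
        = fderiv ℝ ρ (t, x) (1, 0) + fderiv ℝ ρ (t, x) (0, w) := by
      rw [← map_add]
      norm_num
    have hce' := hce t x
    rw [hcediv] at hce'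
    have hval : fderiv ℝ ρ (t, x) (1, w) / ρ (t, x) = -(diverg (fun y => v y t) (X t)) := by
      rw [hdivv t (X t), ← hx, hsplit, div_eq_iff (hρpos (t, x)).ne']
      linear_combination hce'
    rw [← hval]
    exact hlog
  have hint : IntervalIntegrable (fun t => diverg (fun y => v y t) (X t))
      MeasureTheory.volume 0 1 := hcont.intervalIntegrable _ _
  have hFTC := intervalIntegral.integral_eq_sub_of_hasDerivAt
    (fun t _ => key t) hint.neg
  rw [intervalIntegral.integral_neg] at hFTC
  linarith [hFTC]
end

section
/- Hyvärinen's score matching identity in one dimension: if ρ is a C¹ strictly positive probability density on ℝ and s_θ : ℝ → ℝ is C¹, with ρ(x)·s_θ(x) → 0 as |x| → ∞ and suitable integrability, then ∫ ½ (s_θ(x) - (log ρ)'(x))² ρ(x) dx = ∫ (s_θ'(x) + ½ s_θ(x)²) ρ(x) dx + C, where C = ∫ ½ ((log ρ)'(x))² ρ(x) dx does not depend on s_θ. -/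
open MeasureTheory

/-- **Hyvärinen's score matching identity (1-D).** For a `C¹` strictly positive
density `ρ` and a `C¹` model score `s_θ` with boundary decay `ρ·s_θ → 0` and
suitable integrability,
`∫ ½(s_θ - (log ρ)')² ρ = ∫ (s_θ' + ½ s_θ²) ρ + C`
where `C = ∫ ½((log ρ)')² ρ` does not depend on `s_θ`. -/
theorem hyvarinen_score_matching
    (ρ sθ : ℝ → ℝ)
    (hρreg : ContDiff ℝ 1 ρ) (hρpos : ∀ x, 0 < ρ x)
    (hρprob : ∫ x, ρ x = 1)
    (hsreg : ContDiff ℝ 1 sθ)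
    (hdecay_top : Filter.Tendsto (fun x => ρ x * sθ x) Filter.atTop (nhds 0))
    (hdecay_bot : Filter.Tendsto (fun x => ρ x * sθ x) Filter.atBot (nhds 0))
    (hint1 : Integrable fun x =>
      (1 / 2) * (sθ x - deriv (fun y => Real.log (ρ y)) x) ^ 2 * ρ x)
    (hint2 : Integrable fun x => (deriv sθ x + (1 / 2) * sθ x ^ 2) * ρ x)
    (hint3 : Integrable fun x =>
      (1 / 2) * (deriv (fun y => Real.log (ρ y)) x) ^ 2 * ρ x)
    (hint4 : Integrable fun x => sθ x * deriv (fun y => Real.log (ρ y)) x * ρ x)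
    (hint5 : Integrable fun x => deriv sθ x * ρ x) :
    ∫ x, (1 / 2) * (sθ x - deriv (fun y => Real.log (ρ y)) x) ^ 2 * ρ x =
      (∫ x, (deriv sθ x + (1 / 2) * sθ x ^ 2) * ρ x) +
        ∫ x, (1 / 2) * (deriv (fun y => Real.log (ρ y)) x) ^ 2 * ρ x := by
  set L : ℝ → ℝ := fun x => deriv (fun y => Real.log (ρ y)) x with hLdef
  have hρd : ∀ x, HasDerivAt ρ (deriv ρ x) x := fun x =>
    (hρreg.differentiable one_ne_zero x).hasDerivAt
  have hsd : ∀ x, HasDerivAt sθ (deriv sθ x) x := fun x =>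
    (hsreg.differentiable one_ne_zero x).hasDerivAt
  have hL : ∀ x, L x * ρ x = deriv ρ x := by
    intro x
    have h := (Real.hasDerivAt_log (hρpos x).ne').comp x (hρd x)
    have : L x = (ρ x)⁻¹ * deriv ρ x := by
      exact h.deriv
    rw [this]
    field_simp
    exact mul_div_cancel_left₀ _ (hρpos x).ne'
  -- integration by parts
  have hint4' : Integrable fun x => sθ x * deriv ρ x := by
    apply hint4.congr
    filter_upwards with x
    rw [mul_assoc, hL x]
  have hparts : ∫ x, sθ x * deriv ρ x = (0 : ℝ) - 0 - ∫ x, deriv sθ x * ρ x := by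
    refine integral_mul_deriv_eq_deriv_mul (fun x _ => hsd x) (fun x _ => hρd x) hint4' hint5 ?_ ?_
    · exact hdecay_bot.congr fun x => mul_comm _ _
    · exact hdecay_top.congr fun x => mul_comm _ _
  have hparts' : ∫ x, sθ x * L x * ρ x = - ∫ x, deriv sθ x * ρ x := by
    rw [show (fun x => sθ x * L x * ρ x) = fun x => sθ x * deriv ρ x by
      funext x; rw [mul_assoc, hL x]]
    simpa using hparts
  have key : (fun x => (1 / 2) * (sθ x - L x) ^ 2 * ρ x) =
      fun x => ((deriv sθ x + (1 / 2) * sθ x ^ 2) * ρ x +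
        (1 / 2) * (L x) ^ 2 * ρ x) -
        (sθ x * L x * ρ x + deriv sθ x * ρ x) := by
    funext x; ring
  have h23 : Integrable (fun x => (deriv sθ x + (1 / 2) * sθ x ^ 2) * ρ x +
      (1 / 2) * (L x) ^ 2 * ρ x) := hint2.add hint3
  have h45 : Integrable (fun x => sθ x * L x * ρ x + deriv sθ x * ρ x) :=
    hint4.add hint5
  rw [key, integral_sub h23 h45, integral_add hint2 hint3,
    integral_add hint4 hint5, hparts']
  ring
end
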